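/- The interleaving distance between the Reeb precosheaves of (X,f) and (Y,g) equals the interleaving distance between the Reeb precosheaves of their Reeb graphs: d_I(𝒟(Rb(Y,g)), 𝒟(Rb(X,f))) = d_I(𝒟(Y,g), 𝒟(X,f)). -/

import Mathlib

open CategoryTheory Set
open scoped NNReal ENNReal

/-- The Reeb relation of `f : X → ℝ`: `x ∼_f y` iff `y` lies in the connected
component of `x` inside the level set `f ⁻¹' {f x}`. -/
def ReebRel {X : Type*} [TopologicalSpace X] (f : X → ℝ) (x y : X) : Prop :=
  y ∈ connectedComponentIn (f ⁻¹' {f x}) x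

theorem ReebRel.apply_eq {X : Type*} [TopologicalSpace X] {f : X → ℝ} {x y : X}
    (h : ReebRel f x y) : f x = f y :=
  (show f y = f x from connectedComponentIn_subset (f ⁻¹' {f x}) x h).symm

/-- The function induced by `f` on the Reeb quotient. -/
def reebTilde {X : Type*} [TopologicalSpace X] (f : X → ℝ) : Quot (ReebRel f) → ℝ :=
  Quot.lift f fun _ _ h => h.apply_eq

/-- The poset of nonempty open intervals `(a, b)` of `ℝ`, ordered by inclusion. -/
def RInt : Type := {p : ℝ × ℝ // p.1 < p.2}

namespace RInt

instance : Preorder RInt where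
  le I J := J.1.1 ≤ I.1.1 ∧ I.1.2 ≤ J.1.2
  le_refl I := ⟨le_refl _, le_refl _⟩
  le_trans I J K h h' := ⟨h'.1.trans h.1, h.2.trans h'.2⟩

/-- The underlying open interval `(a, b) ⊆ ℝ`. -/
def set (I : RInt) : Set ℝ := Set.Ioo I.1.1 I.1.2

theorem set_mono {I J : RInt} (h : I ≤ J) : I.set ⊆ J.set :=
  Set.Ioo_subset_Ioo h.1 h.2

/-- The `δ`-thickening `(a - δ, b + δ)` of the open interval `(a, b)`. -/
def widen (δ : ℝ≥0) (I : RInt) : RInt :=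
  ⟨(I.1.1 - δ, I.1.2 + δ), by
    have h := I.2
    have h0 : (0 : ℝ) ≤ δ := δ.2
    dsimp only
    linarith⟩

theorem widen_mono (δ : ℝ≥0) : Monotone (widen δ) := by
  intro I J h
  exact ⟨by dsimp [widen]; linarith [h.1], by dsimp [widen]; linarith [h.2]⟩

theorem le_widen (δ : ℝ≥0) (I : RInt) : I ≤ widen δ I := by
  have h0 : (0 : ℝ) ≤ δ := δ.2
  exact ⟨by dsimp [widen]; linarith, by dsimp [widen]; linarith⟩

end RInt

/-- The widening functor `ω_δ` sending `(a, b)` to `(a - δ, b + δ)`. -/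
def widenFunctor (δ : ℝ≥0) : RInt ⥤ RInt := (RInt.widen_mono δ).functor

/-- Two functors `C, D : Int ⥤ 𝒜` are `δ`-interleaved if there are natural
transformations `Φ : C ⟶ D ∘ ω_δ` and `Ψ : D ⟶ C ∘ ω_δ` whose composites are
the maps induced by the inclusions `I ⊆ ω_δ (ω_δ I) = ω_{2δ} I`. -/
def IsInterleaving {A : Type*} [Category A] (δ : ℝ≥0) (C D : RInt ⥤ A) : Prop :=
  ∃ (Φ : C ⟶ widenFunctor δ ⋙ D) (Ψ : D ⟶ widenFunctor δ ⋙ C),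
    (∀ I : RInt, Φ.app I ≫ Ψ.app ((widenFunctor δ).obj I) =
      C.map (homOfLE ((RInt.le_widen δ I).trans (RInt.le_widen δ (RInt.widen δ I))))) ∧
    (∀ I : RInt, Ψ.app I ≫ Φ.app ((widenFunctor δ).obj I) =
      D.map (homOfLE ((RInt.le_widen δ I).trans (RInt.le_widen δ (RInt.widen δ I)))))

/-- The interleaving distance between two functors on the poset of open intervals. -/
noncomputable def interleavingDist {A : Type*} [Category A] (C D : RInt ⥤ A) : ℝ≥0∞ :=
  ⨅ (δ : ℝ≥0) (_ : IsInterleaving δ C D), (δ : ℝ≥0∞)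

/-- The Reeb precosheaf `𝒟(X, f)`, sending an open interval `I` to the set of
connected components of `f ⁻¹' I`, with maps induced by inclusions. -/
def reebPrecosheaf {X : Type u} [TopologicalSpace X] (f : X → ℝ) : RInt ⥤ Type u where
  obj I := ConnectedComponents ↥(f ⁻¹' I.set)
  map {I J} h :=
    TypeCat.ofHom
      (continuous_inclusion (Set.preimage_mono (RInt.set_mono h.le))).connectedComponentsMap
  map_id I := by
    ext c
    obtain ⟨x, rfl⟩ := ConnectedComponents.surjective_coe c
    rfl
  map_comp {I J K} h h' := by
    ext c
    obtain ⟨x, rfl⟩ := ConnectedComponents.surjective_coe c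
    rfl

/-!
The Reeb quotient map `X → X/∼_f` is a quotient map whose fibres are the connected components
of the level sets of `f`. Over an open interval `I` it restricts to a quotient map
`f⁻¹(I) → f̃⁻¹(I)` with the same, preconnected, fibres, and such a map induces a bijection on
connected components. These bijections commute with the maps induced by inclusions, so
`𝒟(X, f) ≅ 𝒟(Rb(X, f))`, and the interleaving distance only depends on the isomorphism classes
of its arguments.
-/

open Topology

universe u

theorem Topology.IsQuotientMap.connectedComponentsMap_restrictPreimage_bijective
    {α β : Type*} [TopologicalSpace α] [TopologicalSpace β] {q : α → β} (hq : IsQuotientMap q)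
    (hfib : ∀ y, IsPreconnected (q ⁻¹' {y})) {t : Set β} (ht : IsOpen t) :
    (hq.restrictPreimage_isOpen ht).continuous.connectedComponentsMap.Bijective := by
  refine (hq.restrictPreimage_isOpen ht).isCoinducing.connectedComponentsMap_bijective
    fun y => ⟨(hq.surjective.restrictPreimage t).nonempty_preimage.2 (Set.singleton_nonempty y),
      ?_⟩
  rw [← IsInducing.subtypeVal.isPreconnected_image, Set.image_val_preimage_restrictPreimage,
    Set.image_singleton]
  exact hfib y

section Reeb

variable {X : Type*} [TopologicalSpace X] {f : X → ℝ}

theorem reebRel_iff {x y : X} :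
    ReebRel f x y ↔
      connectedComponentIn (f ⁻¹' {f x}) x = connectedComponentIn (f ⁻¹' {f y}) y := by
  refine ⟨fun h => ?_, fun h => ?_⟩
  · rw [← h.apply_eq]
    exact connectedComponentIn_eq h
  · show y ∈ connectedComponentIn (f ⁻¹' {f x}) x
    rw [h]
    exact mem_connectedComponentIn rfl

theorem reebRel_equivalence (f : X → ℝ) : Equivalence (ReebRel f) :=
  ⟨fun _ => reebRel_iff.2 rfl, fun h => reebRel_iff.2 (reebRel_iff.1 h).symm,
    fun h h' => reebRel_iff.2 ((reebRel_iff.1 h).trans (reebRel_iff.1 h'))⟩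

theorem preimage_reebQuot_singleton (x : X) :
    Quot.mk (ReebRel f) ⁻¹' {Quot.mk (ReebRel f) x} = connectedComponentIn (f ⁻¹' {f x}) x := by
  ext y
  rw [Set.mem_preimage, Set.mem_singleton_iff, Quot.eq, (reebRel_equivalence f).eqvGen_iff]
  exact ⟨(reebRel_equivalence f).symm, (reebRel_equivalence f).symm⟩

theorem isPreconnected_preimage_reebQuot_singleton (z : Quot (ReebRel f)) :
    IsPreconnected (Quot.mk (ReebRel f) ⁻¹' {z}) := by
  obtain ⟨x, rfl⟩ := Quot.exists_rep z
  rw [preimage_reebQuot_singleton]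
  exact isPreconnected_connectedComponentIn

theorem continuous_reebTilde (hf : Continuous f) : Continuous (reebTilde f) :=
  isQuotientMap_quot_mk.continuous_iff.mpr hf

end Reeb

theorem IsInterleaving.of_iso {A : Type*} [Category A] {δ : ℝ≥0} {C C' D D' : RInt ⥤ A}
    (eC : C ≅ C') (eD : D ≅ D') (h : IsInterleaving δ C D) : IsInterleaving δ C' D' := by
  obtain ⟨Φ, Ψ, hΦΨ, hΨΦ⟩ := h
  refine ⟨eC.inv ≫ Φ ≫ Functor.whiskerLeft (widenFunctor δ) eD.hom,
    eD.inv ≫ Ψ ≫ Functor.whiskerLeft (widenFunctor δ) eC.hom, fun I => ?_, fun I => ?_⟩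
  · simp only [NatTrans.comp_app, Functor.whiskerLeft_app, Category.assoc,
      Iso.hom_inv_id_app_assoc, reassoc_of% (hΦΨ I)]
    exact NatIso.naturality_1 eC _
  · simp only [NatTrans.comp_app, Functor.whiskerLeft_app, Category.assoc,
      Iso.hom_inv_id_app_assoc, reassoc_of% (hΨΦ I)]
    exact NatIso.naturality_1 eD _

theorem interleavingDist_congr {A : Type*} [Category A] {C C' D D' : RInt ⥤ A}
    (eC : C ≅ C') (eD : D ≅ D') : interleavingDist C D = interleavingDist C' D' :=
  iInf_congr fun _ => iInf_congr_Prop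
    ⟨fun h => h.of_iso eC eD, fun h => h.of_iso eC.symm eD.symm⟩ fun _ => rfl

noncomputable def reebPrecosheafIsoReebTilde {X : Type u} [TopologicalSpace X] {f : X → ℝ}
    (hf : Continuous f) : reebPrecosheaf f ≅ reebPrecosheaf (reebTilde f) :=
  -- `Quot.mk _ ⁻¹' (reebTilde f ⁻¹' I.set)` is `f ⁻¹' I.set` by definitional unfolding.
  NatIso.ofComponents
    (fun I => (Equiv.ofBijective _
      (isQuotientMap_quot_mk.connectedComponentsMap_restrictPreimage_bijective
        isPreconnected_preimage_reebQuot_singleton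
        (isOpen_Ioo.preimage (continuous_reebTilde hf)))).toIso)
    fun _ => by
      ext c
      obtain ⟨x, rfl⟩ := ConnectedComponents.surjective_coe c
      rfl

theorem stmt12 {X Y : Type u} [TopologicalSpace X] [TopologicalSpace Y]
    (f : X → ℝ) (g : Y → ℝ) (hf : Continuous f) (hg : Continuous g) :
    interleavingDist (reebPrecosheaf (reebTilde g)) (reebPrecosheaf (reebTilde f)) =
      interleavingDist (reebPrecosheaf g) (reebPrecosheaf f) :=
  interleavingDist_congr (reebPrecosheafIsoReebTilde hg).symm (reebPrecosheafIsoReebTilde hf).symm
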